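/- If a₁ = a₃ = 0 and (a₂−a₄)(2a₂+a₄) ≠ 0, then the Lie algebra g(0,a₂,0,a₄) is isomorphic as a real Lie algebra to so(3,ℝ) × so(3,ℝ) when (a₂−a₄)(2a₂+a₄) > 0, and to sl(2,ℝ) × sl(2,ℝ) when (a₂−a₄)(2a₂+a₄) < 0. (This is the Lie-algebra form of Remark 3 of Puhle's paper: Proposition 4(c),(d) remains valid after swapping a₁ with a₂ and a₃ with a₄.) -/
import Mathlib


open scoped Matrix

/-- The Lie bracket of the 6-dimensional Lie algebra `g(a₁,a₂,a₃,a₄)` of Puhle's paper,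
written on `ℝ⁶` with the basis `X₁,…,X₆` corresponding to the 0-based coordinates `0,…,5`.
Here `p = 2a₁+a₃`, `q = 2a₂+a₄`, `r = a₁−a₃`, `s = a₂−a₄`,
`α = −2(rp + sq)`, and the bracket is determined by `[X₆,X₁]=X₂`, `[X₆,X₂]=−X₁`,
`[X₆,X₃]=−X₄`, `[X₆,X₄]=X₃`, `[X₁,X₅]=−p·X₃−q·X₄`, `[X₂,X₅]=−q·X₃+p·X₄`,
`[X₃,X₅]=p·X₁+q·X₂`, `[X₄,X₅]=q·X₁−p·X₂`, `[X₁,X₃]=2r·X₅`, `[X₂,X₄]=−2r·X₅`,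
`[X₁,X₄]=2s·X₅`, `[X₂,X₃]=2s·X₅`, `[X₁,X₂]=−α·X₆`, `[X₃,X₄]=α·X₆`,
all other brackets of basis vectors being zero. -/
def gBracket (a₁ a₂ a₃ a₄ : ℝ) (x y : Fin 6 → ℝ) : Fin 6 → ℝ :=
  let p := 2 * a₁ + a₃
  let q := 2 * a₂ + a₄
  let r := a₁ - a₃
  let s := a₂ - a₄
  let α := -2 * (r * p + s * q)
  let w : Fin 6 → Fin 6 → ℝ := fun i j => x i * y j - x j * y i
  ![p * w 2 4 + q * w 3 4 + w 1 5,
    q * w 2 4 - p * w 3 4 - w 0 5,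
    -(p * w 0 4) - q * w 1 4 - w 3 5,
    -(q * w 0 4) + p * w 1 4 + w 2 5,
    2 * r * (w 0 2 - w 1 3) + 2 * s * (w 0 3 + w 1 2),
    -(α * w 0 1) + α * w 2 3]

section vec6
variable {α : Type*} (a b c d e f : α)
@[simp] lemma v6_0 : ![a,b,c,d,e,f] 0 = a := rfl
@[simp] lemma v6_1 : ![a,b,c,d,e,f] 1 = b := rfl
@[simp] lemma v6_2 : ![a,b,c,d,e,f] 2 = c := rfl
@[simp] lemma v6_3 : ![a,b,c,d,e,f] 3 = d := rfl
@[simp] lemma v6_4 : ![a,b,c,d,e,f] 4 = e := rfl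
@[simp] lemma v6_5 : ![a,b,c,d,e,f] 5 = f := rfl
end vec6

/-- standard element of so(3). -/
def mkSo (a b c : ℝ) : LieAlgebra.Orthogonal.so (Fin 3) ℝ :=
  ⟨!![0,-c,b; c,0,-a; -b,a,0], by
    rw [LieAlgebra.Orthogonal.mem_so]
    ext i j; fin_cases i <;> fin_cases j <;> simp⟩

@[simp] lemma mkSo_val (a b c : ℝ) : (mkSo a b c).val = !![0,-c,b; c,0,-a; -b,a,0] := rfl

lemma mkSo_eq {a b c a' b' c' : ℝ} (ha : a = a') (hb : b = b') (hc : c = c') :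
    mkSo a b c = mkSo a' b' c' := by subst ha; subst hb; subst hc; rfl

lemma mkSo_add (a b c a' b' c' : ℝ) :
    mkSo a b c + mkSo a' b' c' = mkSo (a + a') (b + b') (c + c') := by
  apply Subtype.ext
  show (mkSo a b c).val + (mkSo a' b' c').val = _
  ext i j; fin_cases i <;> fin_cases j <;> simp [Matrix.add_apply] <;> ring

lemma mkSo_smul (r a b c : ℝ) : r • mkSo a b c = mkSo (r * a) (r * b) (r * c) := by
  apply Subtype.ext
  show r • (mkSo a b c).val = _
  ext i j; fin_cases i <;> fin_cases j <;> simp [Matrix.smul_apply] <;> ring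

lemma mkSo_bracket (a b c a' b' c' : ℝ) :
    ⁅mkSo a b c, mkSo a' b' c'⁆
      = mkSo (b * c' - c * b') (c * a' - a * c') (a * b' - b * a') := by
  apply Subtype.ext
  show ⁅(mkSo a b c).val, (mkSo a' b' c').val⁆ = _
  rw [Ring.lie_def]
  ext i j
  fin_cases i <;> fin_cases j <;> simp [Matrix.mul_apply, Fin.sum_univ_succ] <;> ring

/-- standard element of sl(2). -/
def mkSl (h e f : ℝ) : LieAlgebra.SpecialLinear.sl (Fin 2) ℝ :=
  ⟨!![h, e; f, -h], by
    show !![h, e; f, -h] ∈ LinearMap.ker (Matrix.traceLinearMap (Fin 2) ℝ ℝ)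
    rw [LinearMap.mem_ker]
    simp [Matrix.traceLinearMap, Matrix.trace_fin_two]⟩

@[simp] lemma mkSl_val (h e f : ℝ) : (mkSl h e f).val = !![h, e; f, -h] := rfl

lemma mkSl_eq {a b c a' b' c' : ℝ} (ha : a = a') (hb : b = b') (hc : c = c') :
    mkSl a b c = mkSl a' b' c' := by subst ha; subst hb; subst hc; rfl

lemma mkSl_add (a b c a' b' c' : ℝ) :
    mkSl a b c + mkSl a' b' c' = mkSl (a + a') (b + b') (c + c') := by
  apply Subtype.ext
  show (mkSl a b c).val + (mkSl a' b' c').val = _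
  ext i j; fin_cases i <;> fin_cases j <;> simp [Matrix.add_apply] <;> ring

lemma mkSl_smul (r a b c : ℝ) : r • mkSl a b c = mkSl (r * a) (r * b) (r * c) := by
  apply Subtype.ext
  show r • (mkSl a b c).val = _
  ext i j; fin_cases i <;> fin_cases j <;> simp [Matrix.smul_apply] <;> ring

lemma mkSl_bracket (h e f h' e' f' : ℝ) :
    ⁅mkSl h e f, mkSl h' e' f'⁆
      = mkSl (e * f' - e' * f) (2 * (h * e' - h' * e)) (2 * (h' * f - h * f')) := by
  apply Subtype.ext
  show ⁅(mkSl h e f).val, (mkSl h' e' f').val⁆ = _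
  rw [Ring.lie_def]
  ext i j
  fin_cases i <;> fin_cases j <;> simp [Matrix.mul_apply, Fin.sum_univ_succ] <;> ring

noncomputable def soEquiv (q t : ℝ) (hq : q ≠ 0) (ht : t ≠ 0) :
    (Fin 6 → ℝ) ≃ₗ[ℝ]
      (LieAlgebra.Orthogonal.so (Fin 3) ℝ × LieAlgebra.Orthogonal.so (Fin 3) ℝ) where
  toFun x := (mkSo (t * (x 0 + x 2)) (t * (x 1 - x 3)) (x 5 - q * x 4),
              mkSo (t * (x 0 - x 2)) (t * (x 1 + x 3)) (x 5 + q * x 4))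
  map_add' x y := by
    simp only [Pi.add_apply, Prod.mk_add_mk, mkSo_add]
    exact Prod.ext (mkSo_eq (by ring) (by ring) (by ring)) (mkSo_eq (by ring) (by ring) (by ring))
  map_smul' r x := by
    simp only [Pi.smul_apply, smul_eq_mul, RingHom.id_apply, Prod.smul_mk, mkSo_smul]
    exact Prod.ext (mkSo_eq (by ring) (by ring) (by ring)) (mkSo_eq (by ring) (by ring) (by ring))
  invFun P :=
    ![(P.1.val 2 1 + P.2.val 2 1) / (2 * t),
      (P.1.val 0 2 + P.2.val 0 2) / (2 * t),
      (P.1.val 2 1 - P.2.val 2 1) / (2 * t),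
      (P.2.val 0 2 - P.1.val 0 2) / (2 * t),
      (P.2.val 1 0 - P.1.val 1 0) / (2 * q),
      (P.1.val 1 0 + P.2.val 1 0) / 2]
  left_inv x := by
    funext i
    fin_cases i <;> (simp; try (field_simp; ring))
  right_inv P := by
    obtain ⟨⟨A, hA⟩, ⟨B, hB⟩⟩ := P
    rw [LieAlgebra.Orthogonal.mem_so] at hA hB
    have hA' : ∀ i j, A j i = -A i j := fun i j => by
      have := congr_fun (congr_fun hA i) j; simpa using this
    have hB' : ∀ i j, B j i = -B i j := fun i j => by
      have := congr_fun (congr_fun hB i) j; simpa using this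
    have hA00 : A 0 0 = 0 := by linarith [hA' 0 0]
    have hA11 : A 1 1 = 0 := by linarith [hA' 1 1]
    have hA22 : A 2 2 = 0 := by linarith [hA' 2 2]
    have hB00 : B 0 0 = 0 := by linarith [hB' 0 0]
    have hB11 : B 1 1 = 0 := by linarith [hB' 1 1]
    have hB22 : B 2 2 = 0 := by linarith [hB' 2 2]
    refine Prod.ext (Subtype.ext ?_) (Subtype.ext ?_) <;>
    · ext i j
      fin_cases i <;> fin_cases j <;>
        simp only [mkSo_val, v6_0, v6_1, v6_2, v6_3, v6_4, v6_5] <;>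
        simp [hA00, hA11, hA22, hB00, hB11, hB22, hA' 1 0, hA' 2 1, hA' 0 2,
          hB' 1 0, hB' 2 1, hB' 0 2] <;>
        field_simp <;> ring

noncomputable def slEquiv (q t : ℝ) (hq : q ≠ 0) (ht : t ≠ 0) :
    (Fin 6 → ℝ) ≃ₗ[ℝ]
      (LieAlgebra.SpecialLinear.sl (Fin 2) ℝ × LieAlgebra.SpecialLinear.sl (Fin 2) ℝ) where
  toFun x := (mkSl (t * (x 0 - x 2) / 2) ((t * (x 1 + x 3) - (x 5 + q * x 4)) / 2)
                ((t * (x 1 + x 3) + (x 5 + q * x 4)) / 2),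
              mkSl (t * (x 0 + x 2) / 2) ((t * (x 1 - x 3) - (x 5 - q * x 4)) / 2)
                ((t * (x 1 - x 3) + (x 5 - q * x 4)) / 2))
  map_add' x y := by
    simp only [Pi.add_apply, Prod.mk_add_mk, mkSl_add]
    exact Prod.ext (mkSl_eq (by ring) (by ring) (by ring)) (mkSl_eq (by ring) (by ring) (by ring))
  map_smul' r x := by
    simp only [Pi.smul_apply, smul_eq_mul, RingHom.id_apply, Prod.smul_mk, mkSl_smul]
    exact Prod.ext (mkSl_eq (by ring) (by ring) (by ring)) (mkSl_eq (by ring) (by ring) (by ring))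
  invFun P :=
    ![(P.1.val 0 0 + P.2.val 0 0) / t,
      (P.1.val 0 1 + P.1.val 1 0 + P.2.val 0 1 + P.2.val 1 0) / (2 * t),
      (P.2.val 0 0 - P.1.val 0 0) / t,
      (P.1.val 0 1 + P.1.val 1 0 - P.2.val 0 1 - P.2.val 1 0) / (2 * t),
      (P.1.val 1 0 - P.1.val 0 1 - P.2.val 1 0 + P.2.val 0 1) / (2 * q),
      (P.1.val 1 0 - P.1.val 0 1 + P.2.val 1 0 - P.2.val 0 1) / 2]
  left_inv x := by
    funext i
    fin_cases i <;> (simp; try (field_simp; ring))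
  right_inv P := by
    obtain ⟨⟨A, hA⟩, ⟨B, hB⟩⟩ := P
    have htrA : Matrix.trace A = 0 := hA
    have htrB : Matrix.trace B = 0 := hB
    rw [Matrix.trace_fin_two] at htrA htrB
    have hA11 : A 1 1 = -(A 0 0) := by linarith
    have hB11 : B 1 1 = -(B 0 0) := by linarith
    refine Prod.ext (Subtype.ext ?_) (Subtype.ext ?_) <;>
    · ext i j
      fin_cases i <;> fin_cases j <;>
        simp [hA11, hB11] <;> field_simp <;> ring

/-- If `a₁ = a₃ = 0` and `(a₂−a₄)(2a₂+a₄) ≠ 0`, the Lie algebra `g(0,a₂,0,a₄)` is isomorphic,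
as a real Lie algebra, to `so(3,ℝ) × so(3,ℝ)` when `(a₂−a₄)(2a₂+a₄) > 0`, and to
`sl(2,ℝ) × sl(2,ℝ)` when `(a₂−a₄)(2a₂+a₄) < 0` (Remark 3 of Puhle's paper). -/

theorem g_iso_of_swap (a₂ a₄ : ℝ) (h : (a₂ - a₄) * (2 * a₂ + a₄) ≠ 0) :
    ((a₂ - a₄) * (2 * a₂ + a₄) > 0 →
      ∃ e : (Fin 6 → ℝ) ≃ₗ[ℝ]
          (LieAlgebra.Orthogonal.so (Fin 3) ℝ × LieAlgebra.Orthogonal.so (Fin 3) ℝ),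
        ∀ x y : Fin 6 → ℝ,
          (e (gBracket 0 a₂ 0 a₄ x y)).1 = ⁅(e x).1, (e y).1⁆
            ∧ (e (gBracket 0 a₂ 0 a₄ x y)).2 = ⁅(e x).2, (e y).2⁆)
    ∧ ((a₂ - a₄) * (2 * a₂ + a₄) < 0 →
      ∃ e : (Fin 6 → ℝ) ≃ₗ[ℝ]
          (LieAlgebra.SpecialLinear.sl (Fin 2) ℝ × LieAlgebra.SpecialLinear.sl (Fin 2) ℝ),
        ∀ x y : Fin 6 → ℝ,
          (e (gBracket 0 a₂ 0 a₄ x y)).1 = ⁅(e x).1, (e y).1⁆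
            ∧ (e (gBracket 0 a₂ 0 a₄ x y)).2 = ⁅(e x).2, (e y).2⁆) := by
  have hq : 2 * a₂ + a₄ ≠ 0 := (mul_ne_zero_iff.mp h).2
  constructor
  · intro hpos
    set T : ℝ := Real.sqrt (2 * ((a₂ - a₄) * (2 * a₂ + a₄))) with hT
    have ht2 : T ^ 2 = 2 * ((a₂ - a₄) * (2 * a₂ + a₄)) :=
      Real.sq_sqrt (by linarith)
    have ht0 : T ≠ 0 := Real.sqrt_ne_zero'.mpr (by linarith)
    refine ⟨soEquiv (2 * a₂ + a₄) T hq ht0, fun x y => ⟨?_, ?_⟩⟩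
    · show mkSo _ _ _ = ⁅mkSo _ _ _, mkSo _ _ _⁆
      rw [mkSo_bracket]
      refine mkSo_eq ?_ ?_ ?_ <;>
        simp only [gBracket, v6_0, v6_1, v6_2, v6_3, v6_4, v6_5]
      · ring
      · ring
      · linear_combination (x 1 * y 0 + x 1 * y 2 + x 0 * y 3 - x 0 * y 1
          + x 2 * y 3 - x 2 * y 1 - x 3 * y 0 - x 3 * y 2) * ht2
    · show mkSo _ _ _ = ⁅mkSo _ _ _, mkSo _ _ _⁆
      rw [mkSo_bracket]
      refine mkSo_eq ?_ ?_ ?_ <;>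
        simp only [gBracket, v6_0, v6_1, v6_2, v6_3, v6_4, v6_5]
      · ring
      · ring
      · linear_combination (-(x 3 * y 2) + x 3 * y 0 + x 2 * y 3 + x 2 * y 1
          - x 1 * y 2 + x 1 * y 0 - x 0 * y 3 - x 0 * y 1) * ht2
  · intro hneg
    set T : ℝ := Real.sqrt (-(2 * ((a₂ - a₄) * (2 * a₂ + a₄)))) with hT
    have ht2 : T ^ 2 = -(2 * ((a₂ - a₄) * (2 * a₂ + a₄))) :=
      Real.sq_sqrt (by linarith)
    have ht0 : T ≠ 0 := Real.sqrt_ne_zero'.mpr (by linarith)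
    refine ⟨slEquiv (2 * a₂ + a₄) T hq ht0, fun x y => ⟨?_, ?_⟩⟩
    · show mkSl _ _ _ = ⁅mkSl _ _ _, mkSl _ _ _⁆
      rw [mkSl_bracket]
      refine mkSl_eq ?_ ?_ ?_ <;>
        simp only [gBracket, v6_0, v6_1, v6_2, v6_3, v6_4, v6_5]
      · ring
      · linear_combination ((-(x 3 * y 2) + x 3 * y 0 + x 2 * y 3 + x 2 * y 1
          - x 1 * y 2 + x 1 * y 0 - x 0 * y 3 - x 0 * y 1) / 2) * ht2
      · linear_combination ((x 3 * y 2 - x 3 * y 0 - x 2 * y 3 - x 2 * y 1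
          + x 1 * y 2 - x 1 * y 0 + x 0 * y 3 + x 0 * y 1) / 2) * ht2
    · show mkSl _ _ _ = ⁅mkSl _ _ _, mkSl _ _ _⁆
      rw [mkSl_bracket]
      refine mkSl_eq ?_ ?_ ?_ <;>
        simp only [gBracket, v6_0, v6_1, v6_2, v6_3, v6_4, v6_5]
      · ring
      · linear_combination ((-(x 3 * y 2) - x 3 * y 0 + x 2 * y 3 - x 2 * y 1
          + x 1 * y 2 + x 1 * y 0 + x 0 * y 3 - x 0 * y 1) / 2) * ht2
      · linear_combination ((x 3 * y 2 + x 3 * y 0 - x 2 * y 3 + x 2 * y 1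
          - x 1 * y 2 - x 1 * y 0 - x 0 * y 3 + x 0 * y 1) / 2) * ht2
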